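/- Let G be a countable discrete group with a partial action ({X_t}, {h_t}) on a compact Hausdorff space X such that every X_t is clopen. Then for each t ∈ G, the map i_t : X → X^e defined by i_t(x) = q(t,x) (where q is the quotient map onto the envelope space) is continuous, open, and closed. -/
import Mathlib


/-- A partial action of a group `G` on a set `X`. -/
structure PartialAction (G : Type*) [Group G] (X : Type*) where
  dom : G → Set X
  h : G → X → X
  dom_one : dom 1 = Set.univ
  h_one : ∀ x, h 1 x = x
  bijOn : ∀ t, Set.BijOn (h t) (dom t⁻¹) (dom t)
  image_inter : ∀ t s, h t '' (dom t⁻¹ ∩ dom s) = dom t ∩ dom (t * s)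
  hcomp : ∀ t s x, x ∈ dom s⁻¹ ∩ dom (s⁻¹ * t⁻¹) → h t (h s x) = h (t * s) x

/-- A topological partial action: the domains are open and each `h t` is a homeomorphism
of `X_{t⁻¹}` onto `X_t` (continuity of the inverse is `continuousOn t⁻¹`). -/
structure TopPartialAction (G : Type*) [Group G] (X : Type*) [TopologicalSpace X]
    extends PartialAction G X where
  isOpen_dom : ∀ t, IsOpen (dom t)
  continuousOn : ∀ t, ContinuousOn (h t) (dom t⁻¹)

/-- The relation `(r,x) ∼ (s,y) ↔ x ∈ X_{r⁻¹s} ∧ h_{s⁻¹r}(x) = y`. -/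
def PartialAction.rel {G X : Type*} [Group G] (θ : PartialAction G X) :
    G × X → G × X → Prop :=
  fun p q => p.2 ∈ θ.dom (p.1⁻¹ * q.1) ∧ θ.h (q.1⁻¹ * p.1) p.2 = q.2

set_option linter.unusedSectionVars false

private theorem slice_isOpen' {G X : Type*} [TopologicalSpace G] [DiscreteTopology G]
    [TopologicalSpace X] (B : G → Set X) (hB : ∀ s, IsOpen (B s)) :
    IsOpen {p : G × X | p.2 ∈ B p.1} := by
  have : {p : G × X | p.2 ∈ B p.1} = ⋃ s : G, {s} ×ˢ B s := by
    ext ⟨s, y⟩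
    simp [Set.mem_iUnion, Set.mem_prod]
  rw [this]
  exact isOpen_iUnion fun s => (isOpen_discrete _).prod (hB s)

theorem envelope_inclusion_continuous_open_closed {G X : Type*} [Group G] [Countable G]
    [TopologicalSpace G] [DiscreteTopology G]
    [TopologicalSpace X] [CompactSpace X] [T2Space X]
    (θ : TopPartialAction G X) (heq : Equivalence θ.toPartialAction.rel)
    (hclopen : ∀ t : G, IsClopen (θ.dom t)) :
    ∀ t : G,
      Continuous (fun x : X => Quotient.mk (Setoid.mk θ.toPartialAction.rel heq) (t, x)) ∧
      IsOpenMap (fun x : X => Quotient.mk (Setoid.mk θ.toPartialAction.rel heq) (t, x)) ∧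
      IsClosedMap (fun x : X => Quotient.mk (Setoid.mk θ.toPartialAction.rel heq) (t, x)) := by
  intro t
  set σ : Setoid (G × X) := Setoid.mk θ.toPartialAction.rel heq with hσ
  -- continuity of each `h (t⁻¹ * s)` on `dom (s⁻¹ * t)`
  have hco : ∀ s : G, ContinuousOn (θ.h (t⁻¹ * s)) (θ.dom (s⁻¹ * t)) := by
    intro s
    have := θ.continuousOn (t⁻¹ * s)
    rwa [mul_inv_rev, inv_inv] at this
  -- the saturation of `i_t '' U`
  have key : ∀ U : Set X,
      (Quotient.mk σ) ⁻¹' ((fun x : X => Quotient.mk σ (t, x)) '' U)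
        = {p : G × X | p.2 ∈ θ.dom (p.1⁻¹ * t) ∩ θ.h (t⁻¹ * p.1) ⁻¹' U} := by
    intro U
    ext p
    simp only [Set.mem_preimage, Set.mem_image, Set.mem_setOf_eq, Set.mem_inter_iff]
    constructor
    · rintro ⟨x, hx, hq⟩
      have hrel : θ.toPartialAction.rel p (t, x) := Quotient.exact hq.symm
      obtain ⟨h1, h2⟩ := hrel
      exact ⟨h1, by rw [h2]; exact hx⟩
    · rintro ⟨h1, h2⟩
      refine ⟨θ.h (t⁻¹ * p.1) p.2, h2, (Quotient.sound ?_).symm⟩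
      exact show θ.toPartialAction.rel p (t, θ.h (t⁻¹ * p.1) p.2) from ⟨h1, rfl⟩
  refine ⟨?_, ?_, ?_⟩
  · exact continuous_quotient_mk'.comp (Continuous.prodMk_right t)
  · intro U hU
    rw [isOpen_coinduced (f := Quotient.mk σ)]
    rw [key U]
    exact slice_isOpen' _ fun s => (hco s).isOpen_inter_preimage (θ.isOpen_dom _) hU
  · intro U hU
    have : IsClosed ((Quotient.mk σ) ⁻¹' ((fun x : X => Quotient.mk σ (t, x)) '' U)) := by
      rw [key U, ← isOpen_compl_iff]
      have hc : ∀ s : G, IsClosed (θ.dom (s⁻¹ * t) ∩ θ.h (t⁻¹ * s) ⁻¹' U) :=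
        fun s => (hco s).preimage_isClosed_of_isClosed (hclopen _).isClosed hU
      have heqc : {p : G × X | p.2 ∈ θ.dom (p.1⁻¹ * t) ∩ θ.h (t⁻¹ * p.1) ⁻¹' U}ᶜ
          = {p : G × X | p.2 ∈ (θ.dom (p.1⁻¹ * t) ∩ θ.h (t⁻¹ * p.1) ⁻¹' U)ᶜ} := rfl
      rw [heqc]
      exact slice_isOpen' _ fun s => (hc s).isOpen_compl
    rw [← isOpen_compl_iff, isOpen_coinduced (f := Quotient.mk σ), Set.preimage_compl]
    rw [← isOpen_compl_iff] at this
    exact this
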